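/- Let n ≥ 4 be even and let Ψ be an instance of {1,2}-CSP whose constraint graph G is connected and bipartite, and assume P_∞ ⊨ Ψ. Then P_n ⊨ Ψ if and only if there is no vertex v with γ(v) ≥ n/2. -/

import Mathlib

namespace CountingCSP

/-! ## The basic framework

An instance `Ψ` of `{1,2}`-CSP is modelled by a number `m` of variables, the variable set
being `Fin m` with its natural linear order `<` (the order of quantification `≺`), a function
`β : Fin m → ℕ` taking values in `{1,2}` (variable `v` is quantified by `∃^{≥ β v}`), and a
simple graph `G` on `Fin m` (the constraint graph).  A target graph is a type `B` together
with an adjacency relation `E : B → B → Prop` (loops allowed in general). -/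

/-- Adjacency of the finite path `P_n` on the vertices `{1,…,n}`, modelled as `Fin n`. -/
def pathAdj (n : ℕ) (i j : Fin n) : Prop :=
  (i : ℕ) + 1 = j ∨ (j : ℕ) + 1 = i

/-- Adjacency of the infinite path `P_∞` on `ℤ`: `i` and `j` adjacent iff `|i - j| = 1`. -/
def intPathAdj (i j : ℤ) : Prop := |i - j| = 1

/-- `SatFrom β G E i f` : processing the variables of the instance in `≺`-increasing order
starting from variable `i`, where the earlier variables have been assigned according to `f`,
the instance can be satisfied.  At each variable `v` one asks for a set `S` of `β v` distinct
elements of the target such that for every `b ∈ S` the rest of the instance can be satisfied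
with `v ↦ b`; when all variables are assigned, the assignment must be a homomorphism. -/
def SatFrom {m : ℕ} {B : Type*} (β : Fin m → ℕ) (G : SimpleGraph (Fin m))
    (E : B → B → Prop) (i : ℕ) (f : Fin m → B) : Prop :=
  if h : i < m then
    ∃ S : Finset B, S.card = β ⟨i, h⟩ ∧
      ∀ b ∈ S, SatFrom β G E (i + 1) (Function.update f ⟨i, h⟩ b)
  else ∀ u v : Fin m, G.Adj u v → E (f u) (f v)
termination_by m - i
decreasing_by omega

/-- `Sat β G E` : the instance with quantifiers `β` and constraint graph `G` is satisfied by
the target graph with adjacency `E`  (i.e. `H ⊨ Ψ`).  The initial assignment is irrelevant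
since every variable is assigned before it is used. -/
def Sat {m : ℕ} {B : Type*} (β : Fin m → ℕ) (G : SimpleGraph (Fin m))
    (E : B → B → Prop) : Prop :=
  ∀ f : Fin m → B, SatFrom β G E 0 f

/-- A graph is bipartite iff it has a proper 2-colouring. -/
def Bipartite {V : Type*} (G : SimpleGraph V) : Prop :=
  ∃ c : V → Bool, ∀ u v, G.Adj u v → c u ≠ c v

/-! ## Walks, looping walks, and the distance function δ -/

/-- `λ(Q) = |Q| − 2·∑_{interior vertices x of Q} (β x − 1)`, where `|Q|` is the length
(number of edges) of the walk `Q = x₁,…,x_r`, and the interior vertices are `x₂,…,x_{r−1}`. -/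
def lamWalk {m : ℕ} (β : Fin m → ℕ) (Q : List (Fin m)) : ℤ :=
  ((Q.length : ℤ) - 1) - 2 * (((Q.drop 1).dropLast).map (fun x => (β x : ℤ) - 1)).sum

/-- Looping walks of `G` (with respect to the quantification order `<` on `Fin m`):
a walk `x₁,…,x_r` with `x₁ ≠ x_r` such that if `r ≥ 3` then both endpoints strictly precede
every interior vertex and the walk splits at some interior position into two looping walks. -/
inductive IsLoopingWalk {m : ℕ} (G : SimpleGraph (Fin m)) : List (Fin m) → Prop
  | base {x y : Fin m} : G.Adj x y → IsLoopingWalk G [x, y]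
  | comb {x y z : Fin m} {Q₁ Q₂ : List (Fin m)} :
      IsLoopingWalk G (x :: (Q₁ ++ [y])) →
      IsLoopingWalk G (y :: (Q₂ ++ [z])) →
      x ≠ z →
      (∀ w ∈ Q₁ ++ y :: Q₂, x < w ∧ z < w) →
      IsLoopingWalk G (x :: (Q₁ ++ y :: Q₂ ++ [z]))

/-- `Q` is a looping walk between `u` and `v` (in either direction). -/
def LoopingWalkBetween {m : ℕ} (G : SimpleGraph (Fin m)) (u v : Fin m)
    (Q : List (Fin m)) : Prop :=
  IsLoopingWalk G Q ∧
    ((Q.head? = some u ∧ Q.getLast? = some v) ∨ (Q.head? = some v ∧ Q.getLast? = some u))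

/-- `IsDelta G β u v d` : `d = δ(u,v)`, i.e. `d` is the minimum of `λ(Q)` over all looping
walks `Q` of `G` between `u` and `v`.  (`δ(u,v) < ∞` corresponds to `∃ d, IsDelta G β u v d`.) -/
def IsDelta {m : ℕ} (G : SimpleGraph (Fin m)) (β : Fin m → ℕ) (u v : Fin m) (d : ℤ) : Prop :=
  (∃ Q, LoopingWalkBetween G u v Q ∧ lamWalk β Q = d) ∧
    ∀ Q, LoopingWalkBetween G u v Q → d ≤ lamWalk β Q

/-! ## The functions γ and γ′ -/

/-- `IsGammaVal G β g v t` : `t = max(0, max_{u ≺ v, δ(u,v) < ∞} (g u − δ(u,v) + β v − 1))`. -/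
def IsGammaVal {m : ℕ} (G : SimpleGraph (Fin m)) (β : Fin m → ℕ) (g : Fin m → ℤ)
    (v : Fin m) (t : ℤ) : Prop :=
  0 ≤ t ∧
  (∀ u, u < v → ∀ d, IsDelta G β u v d → g u - d + (β v : ℤ) - 1 ≤ t) ∧
  (t = 0 ∨ ∃ u, u < v ∧ ∃ d, IsDelta G β u v d ∧ t = g u - d + (β v : ℤ) - 1)

/-- `g` is the function `γ`: `γ(v) = 0` for the `≺`-least vertex, and otherwise
`γ(v) = β(v) − 1 + max(0, max_{u ≺ v, δ(u,v) < ∞} (γ(u) − δ(u,v) + β(v) − 1))`. -/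
def IsGamma {m : ℕ} (G : SimpleGraph (Fin m)) (β : Fin m → ℕ) (g : Fin m → ℤ) : Prop :=
  ∀ v : Fin m,
    if (v : ℕ) = 0 then g v = 0
    else ∃ t, IsGammaVal G β g v t ∧ g v = (β v : ℤ) - 1 + t

/-- `g` is the function `γ′`:
`γ′(v) = β(v) − 1 + max(0, max_{u ≺ v, δ(u,v) < ∞} (γ′(u) − δ(u,v) + β(v) − 1))`
(so `γ′(v) = β(v) − 1` for the `≺`-least vertex). -/
def IsGamma' {m : ℕ} (G : SimpleGraph (Fin m)) (β : Fin m → ℕ) (g : Fin m → ℤ) : Prop :=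
  ∀ v : Fin m, ∃ t, IsGammaVal G β g v t ∧ g v = (β v : ℤ) - 1 + t

/-! ## The closure sets (F, R⁺, R⁻) for the {2}-CSP(K₄) algorithm -/

mutual
/-- Membership in the closure set `F` of pairs (initialised as the edge set of `G`). -/
inductive InF {m : ℕ} (G : SimpleGraph (Fin m)) : Finset (Fin m) → Prop
  | edge {x y : Fin m} : G.Adj x y → InF G {x, y}
  | x3a {x y w z : Fin m} : [x, y, w, z].Pairwise (· ≠ ·) →
      x < z → y < z → w < z → ¬(x < w ∧ y < w) →
      InF G {w, z} → InRp G {x, y, z} → InF G {x, w}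
  | x3b {x y w z : Fin m} : [x, y, w, z].Pairwise (· ≠ ·) →
      x < z → y < z → w < z → ¬(x < w ∧ y < w) →
      InF G {w, z} → InRp G {x, y, z} → InF G {y, w}
  | x4 {x y w z : Fin m} : [x, y, w, z].Pairwise (· ≠ ·) →
      x < y → w < y → y < z →
      InRp G {x, y, z} → InRm G {w, y, z} → InF G {x, w}
  | x7a {x y q w z : Fin m} : [x, y, q, w, z].Pairwise (· ≠ ·) →
      x < q → y < q → w < q → q < z → ¬(x < w ∧ y < w) →
      InRp G {x, y, z} → InRm G {w, q, z} → InF G {x, w}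
  | x7a' {x y q w z : Fin m} : [x, y, q, w, z].Pairwise (· ≠ ·) →
      x < q → y < q → w < q → q < z → ¬(x < w ∧ y < w) →
      InRm G {x, y, z} → InRp G {w, q, z} → InF G {x, w}
  | x7b {x y q w z : Fin m} : [x, y, q, w, z].Pairwise (· ≠ ·) →
      x < q → y < q → w < q → q < z → ¬(x < w ∧ y < w) →
      InRp G {x, y, z} → InRm G {w, q, z} → InF G {y, w}
  | x7b' {x y q w z : Fin m} : [x, y, q, w, z].Pairwise (· ≠ ·) →
      x < q → y < q → w < q → q < z → ¬(x < w ∧ y < w) →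
      InRm G {x, y, z} → InRp G {w, q, z} → InF G {y, w}

/-- Membership in the closure set `R⁺` of triples. -/
inductive InRp {m : ℕ} (G : SimpleGraph (Fin m)) : Finset (Fin m) → Prop
  | x2 {x y w z : Fin m} : [x, y, w, z].Pairwise (· ≠ ·) →
      x < z → y < z → w < z →
      InF G {w, z} → InRm G {x, y, z} → InRp G {x, y, w}
  | x4 {x y w z : Fin m} : [x, y, w, z].Pairwise (· ≠ ·) →
      x < y → w < y → y < z →
      InRp G {x, y, z} → InRm G {w, y, z} → InRp G {x, y, w}
  | x5p {x y w z : Fin m} : [x, y, w, z].Pairwise (· ≠ ·) →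
      x < z → y < z → w < z →
      InRp G {x, y, z} → InRp G {w, y, z} → InRp G {x, y, w}
  | x5m {x y w z : Fin m} : [x, y, w, z].Pairwise (· ≠ ·) →
      x < z → y < z → w < z →
      InRm G {x, y, z} → InRm G {w, y, z} → InRp G {x, y, w}
  | x6ap {x y q w z : Fin m} : [x, y, q, w, z].Pairwise (· ≠ ·) →
      x < q → y < q → w < q → q < z →
      InRp G {x, y, z} → InRp G {w, q, z} → InRp G {x, y, w}
  | x6am {x y q w z : Fin m} : [x, y, q, w, z].Pairwise (· ≠ ·) →
      x < q → y < q → w < q → q < z →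
      InRm G {x, y, z} → InRm G {w, q, z} → InRp G {x, y, w}
  | x6bp {x y q w z : Fin m} : [x, y, q, w, z].Pairwise (· ≠ ·) →
      x < q → y < q → w < q → q < z →
      InRp G {x, y, z} → InRp G {w, q, z} → InRp G {x, y, q}
  | x6bm {x y q w z : Fin m} : [x, y, q, w, z].Pairwise (· ≠ ·) →
      x < q → y < q → w < q → q < z →
      InRm G {x, y, z} → InRm G {w, q, z} → InRp G {x, y, q}

/-- Membership in the closure set `R⁻` of triples. -/
inductive InRm {m : ℕ} (G : SimpleGraph (Fin m)) : Finset (Fin m) → Prop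
  | x1 {x y z : Fin m} : [x, y, z].Pairwise (· ≠ ·) →
      x < z → y < z →
      InF G {x, z} → InF G {y, z} → InRm G {x, y, z}
  | x3 {x y w z : Fin m} : [x, y, w, z].Pairwise (· ≠ ·) →
      x < z → y < z → w < z → x < w → y < w →
      InF G {w, z} → InRp G {x, y, z} → InRm G {x, y, w}
  | x7a {x y q w z : Fin m} : [x, y, q, w, z].Pairwise (· ≠ ·) →
      x < q → y < q → w < q → q < z →
      InRp G {x, y, z} → InRm G {w, q, z} → InRm G {x, y, q}
  | x7a' {x y q w z : Fin m} : [x, y, q, w, z].Pairwise (· ≠ ·) →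
      x < q → y < q → w < q → q < z →
      InRm G {x, y, z} → InRp G {w, q, z} → InRm G {x, y, q}
  | x7b {x y q w z : Fin m} : [x, y, q, w, z].Pairwise (· ≠ ·) →
      x < q → y < q → w < q → q < z → x < w → y < w →
      InRp G {x, y, z} → InRm G {w, q, z} → InRm G {x, y, w}
  | x7b' {x y q w z : Fin m} : [x, y, q, w, z].Pairwise (· ≠ ·) →
      x < q → y < q → w < q → q < z → x < w → y < w →
      InRm G {x, y, z} → InRp G {w, q, z} → InRm G {x, y, w}
end

/-!
Read `Ψ` as a game in which, at each variable `v`, the player offers `β v` values and the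
adversary chooses one. Two values offered at a variable joined to an earlier one have the same
parity, so at a `∃^{≥2}` variable they differ by at least `2`. Taking the worse value at each
interior vertex, the adversary forces `val x - val z ≤ λ(Q)` across every looping walk `Q` from
`x` to `z` whose interior is still unassigned. Following the maximising chain in the definition
of `γ`, the adversary forces two plays whose values at `v` differ by `2γ(v)`, which on `P_n`
needs `2γ(v) ≤ n - 1`.

Conversely, if `2γ ≤ n - 2` the player maintains an invariant: the `λ`-bounds
and the parity (from bipartiteness) along looping walks between assigned variables, and the
distance from the ends of the path required by demand chains, which `γ` keeps below `n/2`. The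
bounds on the next value then leave room for two values of the right parity at distance `2`,
or for two adjacent values if no earlier variable is joined to it.
-/

open Function

theorem _root_.SimpleGraph.Walk.sub_emod_two {V : Type*} {G : SimpleGraph V} {φ : V → ℤ}
    (hφ : ∀ u v, G.Adj u v → |φ u - φ v| = 1) {a b : V} (p : G.Walk a b) :
    (φ a - φ b) % 2 = (p.length : ℤ) % 2 := by
  induction p with
  | nil => simp
  | cons hadj p ih =>
    rw [SimpleGraph.Walk.length_cons]
    rcases abs_eq zero_le_one |>.1 (hφ _ _ hadj) with h | h <;> omega

theorem Bipartite.length_emod_two {V : Type*} {G : SimpleGraph V} (hbip : Bipartite G) {a : V}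
    (p : G.Walk a a) : (p.length : ℤ) % 2 = 0 := by
  obtain ⟨c, hc⟩ := hbip
  have hφ : ∀ u v, G.Adj u v → |(if c u then 1 else 0 : ℤ) - if c v then 1 else 0| = 1 := by
    intro u v huv
    have := hc u v huv
    revert this
    cases c u <;> cases c v <;> simp
  simpa using (p.sub_emod_two hφ).symm

@[simp]
theorem _root_.List.getLast?_cons_append_singleton {α : Type*} (x z : α) (L : List α) :
    (x :: (L ++ [z])).getLast? = some z := by
  rw [← List.cons_append, List.getLast?_concat]

variable {m : ℕ}

theorem pos_of_eq_one_or_eq_two {β : Fin m → ℕ} (hβ : ∀ v, β v = 1 ∨ β v = 2) (v : Fin m) :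
    0 < β v := by
  rcases hβ v with h | h <;> omega

/-- `LoopingAbove G i x z L`: `x :: (L ++ [z])` is built like a looping walk and all its interior
vertices are at least `i`; it is a looping walk as soon as `x ≠ z` and `x, z < i`. -/
inductive LoopingAbove (G : SimpleGraph (Fin m)) : ℕ → Fin m → Fin m → List (Fin m) → Prop
  | adj {i : ℕ} {x z : Fin m} : G.Adj x z → LoopingAbove G i x z []
  | split {i : ℕ} {x y z : Fin m} {L₁ L₂ : List (Fin m)} : i ≤ (y : ℕ) →
      LoopingAbove G ((y : ℕ) + 1) x y L₁ → LoopingAbove G ((y : ℕ) + 1) y z L₂ →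
      LoopingAbove G i x z (L₁ ++ y :: L₂)

def lamInterior (β : Fin m → ℕ) (L : List (Fin m)) : ℤ :=
  ((L.length : ℤ) + 1) - 2 * (L.map fun x => (β x : ℤ) - 1).sum

section Walks

variable {G : SimpleGraph (Fin m)} {β : Fin m → ℕ}

theorem lamInterior_append (β : Fin m → ℕ) (y : Fin m) (L₁ L₂ : List (Fin m)) :
    lamInterior β (L₁ ++ y :: L₂) = lamInterior β L₁ + lamInterior β L₂ - 2 * ((β y : ℤ) - 1) := by
  simp only [lamInterior, List.length_append, List.length_cons, List.map_append, List.map_cons,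
    List.sum_append, List.sum_cons]
  push_cast
  ring

@[simp]
theorem lamInterior_reverse (β : Fin m → ℕ) (L : List (Fin m)) :
    lamInterior β L.reverse = lamInterior β L := by
  simp [lamInterior, List.sum_reverse]

theorem lamInterior_emod_two (β : Fin m → ℕ) (L : List (Fin m)) :
    lamInterior β L % 2 = ((L.length : ℤ) + 1) % 2 := by
  simp [lamInterior, Int.sub_emod, Int.mul_emod_right]

theorem lamWalk_cons_append (β : Fin m → ℕ) (x z : Fin m) (L : List (Fin m)) :
    lamWalk β (x :: (L ++ [z])) = lamInterior β L := by
  simp [lamWalk, lamInterior]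

namespace LoopingAbove

theorem mono {i j : ℕ} {x z : Fin m} {L : List (Fin m)} (h : LoopingAbove G j x z L)
    (hij : i ≤ j) : LoopingAbove G i x z L := by
  cases h with
  | adj hxz => exact adj hxz
  | split hy h₁ h₂ => exact split (hij.trans hy) h₁ h₂

theorem reverse {i : ℕ} {x z : Fin m} {L : List (Fin m)} (h : LoopingAbove G i x z L) :
    LoopingAbove G i z x L.reverse := by
  induction h with
  | adj hxz => exact adj hxz.symm
  | split hy _ _ ih₁ ih₂ => simpa using split hy ih₂ ih₁

theorem le_of_mem {i : ℕ} {x z : Fin m} {L : List (Fin m)} (h : LoopingAbove G i x z L) :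
    ∀ w ∈ L, i ≤ (w : ℕ) := by
  induction h with
  | adj => simp
  | split hy _ _ ih₁ ih₂ =>
    intro w hw
    rcases List.mem_append.1 hw with hw | hw
    · have := ih₁ w hw
      omega
    · rcases List.mem_cons.1 hw with rfl | hw
      · exact hy
      · have := ih₂ w hw
        omega

theorem exists_walk {i : ℕ} {x z : Fin m} {L : List (Fin m)} (h : LoopingAbove G i x z L) :
    ∃ p : G.Walk x z, p.length = L.length + 1 := by
  induction h with
  | adj hxz => exact ⟨hxz.toWalk, by simp⟩
  | split _ _ _ ih₁ ih₂ =>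
    obtain ⟨p₁, hp₁⟩ := ih₁
    obtain ⟨p₂, hp₂⟩ := ih₂
    exact ⟨p₁.append p₂, by
      simp only [SimpleGraph.Walk.length_append, hp₁, hp₂, List.length_append, List.length_cons]
      omega⟩

theorem reachable {i : ℕ} {x z : Fin m} {L : List (Fin m)} (h : LoopingAbove G i x z L) :
    G.Reachable x z :=
  let ⟨p, _⟩ := h.exists_walk
  ⟨p⟩

theorem isLoopingWalk {i : ℕ} {x z : Fin m} {L : List (Fin m)} (h : LoopingAbove G i x z L)
    (hx : (x : ℕ) < i) (hz : (z : ℕ) < i) (hxz : x ≠ z) : IsLoopingWalk G (x :: (L ++ [z])) := by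
  induction h with
  | adj hadj => exact .base hadj
  | @split i x y z L₁ L₂ hy h₁ h₂ ih₁ ih₂ =>
    have hint : ∀ w ∈ L₁ ++ y :: L₂, x < w ∧ z < w := by
      intro w hw
      have : i ≤ (w : ℕ) := (split hy h₁ h₂).le_of_mem w hw
      omega
    simpa using IsLoopingWalk.comb (ih₁ (by omega) (by omega) (by omega))
      (ih₂ (by omega) (by omega) (by omega)) hxz hint

theorem loopingWalkBetween {i : ℕ} {u v : Fin m} {L : List (Fin m)}
    (h : LoopingAbove G i u v L) (hu : (u : ℕ) < i) (hv : (v : ℕ) < i) (huv : u ≠ v) :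
    LoopingWalkBetween G u v (u :: (L ++ [v])) :=
  ⟨h.isLoopingWalk hu hv huv, .inl ⟨rfl, by simp⟩⟩

end LoopingAbove

theorem IsLoopingWalk.exists_loopingAbove {Q : List (Fin m)} (h : IsLoopingWalk G Q) :
    ∃ (x z : Fin m) (L : List (Fin m)), Q = x :: (L ++ [z]) ∧
      LoopingAbove G (max (x : ℕ) (z : ℕ) + 1) x z L := by
  induction h with
  | base hxy => exact ⟨_, _, [], rfl, .adj hxy⟩
  | @comb x y z Q₁ Q₂ _ _ _ hint ih₁ ih₂ =>
    obtain ⟨x₁, z₁, L₁, he₁, h₁⟩ := ih₁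
    obtain ⟨x₂, z₂, L₂, he₂, h₂⟩ := ih₂
    obtain ⟨rfl, rfl, rfl⟩ : x = x₁ ∧ Q₁ = L₁ ∧ y = z₁ := by simpa using he₁
    obtain ⟨rfl, rfl, rfl⟩ : y = x₂ ∧ Q₂ = L₂ ∧ z = z₂ := by simpa using he₂
    have hy := hint y (by simp)
    have hx : max (x : ℕ) y = y := by omega
    have hz : max (y : ℕ) z = y := by omega
    rw [hx] at h₁
    rw [hz] at h₂
    exact ⟨x, z, Q₁ ++ y :: Q₂, by simp, .split (by omega) h₁ h₂⟩

theorem LoopingWalkBetween.exists_loopingAbove {u v : Fin m} (huv : u < v) {Q : List (Fin m)}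
    (h : LoopingWalkBetween G u v Q) :
    ∃ L, LoopingAbove G ((v : ℕ) + 1) u v L ∧ lamInterior β L = lamWalk β Q := by
  obtain ⟨hQ, hends⟩ := h
  obtain ⟨x, z, L, rfl, hL⟩ := hQ.exists_loopingAbove
  rw [lamWalk_cons_append]
  rcases hends with ⟨hx, hz⟩ | ⟨hx, hz⟩ <;>
    simp only [List.head?_cons, List.getLast?_cons_append_singleton, Option.some.injEq] at hx hz <;>
    subst hx hz
  · rw [max_eq_right (by omega)] at hL
    exact ⟨L, hL, rfl⟩
  · rw [max_eq_left (by omega)] at hL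
    exact ⟨L.reverse, hL.reverse, lamInterior_reverse β L⟩

end Walks

structure IsIntPathEmbedding {B : Type*} (E : B → B → Prop) (val : B → ℤ) : Prop where
  injective : Injective val
  abs_sub_eq_one : ∀ ⦃a b⦄, E a b → |val a - val b| = 1

theorem isIntPathEmbedding_intPathAdj : IsIntPathEmbedding intPathAdj id :=
  ⟨injective_id, fun _ _ h => h⟩

theorem isIntPathEmbedding_pathAdj (n : ℕ) :
    IsIntPathEmbedding (pathAdj n) fun b : Fin n => (b : ℤ) := by
  refine ⟨fun a b h => Fin.ext (by exact_mod_cast h), fun a b h => ?_⟩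
  rcases h with h | h <;> rw [abs_eq zero_le_one] <;> omega

def AgreeBelow {B : Type*} (i : ℕ) (f f' : Fin m → B) : Prop :=
  ∀ x : Fin m, (x : ℕ) < i → f x = f' x

theorem AgreeBelow.update {B : Type*} {i : ℕ} {f f' : Fin m → B} (h : AgreeBelow i f f')
    {v : Fin m} (hv : i ≤ v) (b : B) : AgreeBelow i (update f v b) f' :=
  fun x hx => (update_of_ne (by omega) b f).trans (h x hx)

section Game

variable {B : Type*} {β : Fin m → ℕ} {G : SimpleGraph (Fin m)} {E : B → B → Prop}
  {val : B → ℤ}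

theorem satFrom_iff_of_lt {i : ℕ} (h : i < m) {f : Fin m → B} :
    SatFrom β G E i f ↔ ∃ S : Finset B, S.card = β ⟨i, h⟩ ∧
      ∀ b ∈ S, SatFrom β G E (i + 1) (update f ⟨i, h⟩ b) := by
  rw [SatFrom, dif_pos h]

theorem satFrom_iff_of_le {i : ℕ} (h : m ≤ i) {f : Fin m → B} :
    SatFrom β G E i f ↔ ∀ u v, G.Adj u v → E (f u) (f v) := by
  rw [SatFrom, dif_neg h.not_gt]

theorem SatFrom.advance (hβ : ∀ v, 0 < β v) {i j : ℕ} {f : Fin m → B}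
    (hs : SatFrom β G E i f) (hij : i ≤ j) :
    ∃ f', AgreeBelow i f' f ∧ SatFrom β G E j f' := by
  induction j, hij using Nat.le_induction with
  | base => exact ⟨f, fun _ _ => rfl, hs⟩
  | succ j hij ih =>
    obtain ⟨f₁, hag, hs₁⟩ := ih
    by_cases hj : j < m
    · obtain ⟨S, hcard, hS⟩ := (satFrom_iff_of_lt hj).1 hs₁
      obtain ⟨b, hb⟩ := Finset.card_pos.1 (hcard ▸ hβ _)
      exact ⟨_, hag.update (show i ≤ j from hij) b, hS b hb⟩
    · exact ⟨f₁, hag, (satFrom_iff_of_le (by omega)).2 ((satFrom_iff_of_le (by omega)).1 hs₁)⟩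

theorem SatFrom.exists_hom (hβ : ∀ v, 0 < β v) {i : ℕ} {f : Fin m → B}
    (hs : SatFrom β G E i f) : ∃ h, AgreeBelow i h f ∧ ∀ u v, G.Adj u v → E (h u) (h v) := by
  obtain ⟨h, hag, hs'⟩ := hs.advance hβ (le_max_left i m)
  exact ⟨h, hag, (satFrom_iff_of_le (le_max_right i m)).1 hs'⟩

theorem Sat.exists_satFrom [Nonempty B] (hβ : ∀ v, 0 < β v) (hsat : Sat β G E) (i : ℕ) :
    ∃ f, SatFrom β G E i f :=
  let ⟨f, _, hf⟩ := (hsat fun _ => Classical.arbitrary B).advance hβ i.zero_le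
  ⟨f, hf⟩

/-- All winning values at `v` have the parity dictated by a walk from the earlier vertex `a`, so
two distinct ones are at distance at least `2`. -/
theorem SatFrom.exists_spread (hβ : ∀ v, β v = 1 ∨ β v = 2) (hemb : IsIntPathEmbedding E val)
    {i : ℕ} {f : Fin m → B} (hs : SatFrom β G E i f) {a v : Fin m} (hiv : i ≤ v) (hav : a < v)
    (hreach : G.Reachable a v) :
    ∃ f₁ f₂, AgreeBelow i f₁ f ∧ AgreeBelow i f₂ f ∧ SatFrom β G E ((v : ℕ) + 1) f₁ ∧
      SatFrom β G E ((v : ℕ) + 1) f₂ ∧ val (f₁ v) + 2 * ((β v : ℤ) - 1) ≤ val (f₂ v) := by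
  obtain ⟨f', hag, hs'⟩ := hs.advance (pos_of_eq_one_or_eq_two hβ) hiv
  obtain ⟨S, hcard, hS⟩ := (satFrom_iff_of_lt v.isLt).1 hs'
  replace hcard : S.card = β v := hcard
  suffices ∃ c₁ ∈ S, ∃ c₂ ∈ S, val c₁ + 2 * ((β v : ℤ) - 1) ≤ val c₂ by
    obtain ⟨c₁, hc₁, c₂, hc₂, hle⟩ := this
    exact ⟨_, _, hag.update hiv c₁, hag.update hiv c₂, hS c₁ hc₁, hS c₂ hc₂, by simpa using hle⟩
  rcases hβ v with hb | hb
  · obtain ⟨c, rfl⟩ := Finset.card_eq_one.1 (hcard.trans hb)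
    exact ⟨c, by simp, c, by simp, by simp [hb]⟩
  obtain ⟨p⟩ := hreach
  have hpar : ∀ c ∈ S, (val (f' a) - val c) % 2 = (p.length : ℤ) % 2 := by
    intro c hc
    obtain ⟨h, hagh, hh⟩ := (hS c hc).exists_hom (pos_of_eq_one_or_eq_two hβ)
    have ha : h a = f' a := (hagh a (by omega)).trans (update_of_ne hav.ne c f')
    have hv : h v = c := (hagh v (by omega)).trans (update_self v c f')
    rw [← ha, ← hv]
    exact p.sub_emod_two (φ := val ∘ h) fun x y hxy => hemb.abs_sub_eq_one (hh x y hxy)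
  obtain ⟨c₁, hc₁, c₂, hc₂, hne⟩ := Finset.one_lt_card.1 (by omega : 1 < S.card)
  have h₁ := hpar c₁ hc₁
  have h₂ := hpar c₂ hc₂
  rcases lt_or_gt_of_ne (hemb.injective.ne hne) with hlt | hlt
  · exact ⟨c₁, hc₁, c₂, hc₂, by rw [hb]; omega⟩
  · exact ⟨c₂, hc₂, c₁, hc₁, by rw [hb]; omega⟩

theorem SatFrom.sub_le_lamInterior (hβ : ∀ v, β v = 1 ∨ β v = 2)
    (hemb : IsIntPathEmbedding E val) {i : ℕ} {x z : Fin m} {L : List (Fin m)}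
    (hw : LoopingAbove G i x z L) {f : Fin m → B} (hs : SatFrom β G E i f) (hx : (x : ℕ) < i)
    (hz : (z : ℕ) < i) : val (f x) - val (f z) ≤ lamInterior β L := by
  induction hw generalizing f with
  | adj hxz =>
    obtain ⟨h, hag, hh⟩ := hs.exists_hom (pos_of_eq_one_or_eq_two hβ)
    have := hemb.abs_sub_eq_one (hh _ _ hxz)
    rw [hag _ hx, hag _ hz] at this
    simp only [lamInterior, List.length_nil, List.map_nil, List.sum_nil]
    linarith [(abs_le.1 this.le).2]
  | @split i x y z L₁ L₂ hy hw₁ _ ih₁ ih₂ =>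
    obtain ⟨f₁, f₂, hag₁, hag₂, hs₁, hs₂, hspread⟩ :=
      hs.exists_spread hβ hemb hy (show x < y by omega) hw₁.reachable
    have h₁ := ih₁ hs₁ (by omega) (by omega)
    have h₂ := ih₂ hs₂ (by omega) (by omega)
    rw [hag₁ x hx] at h₁
    rw [hag₂ z hz] at h₂
    rw [lamInterior_append]
    linarith

theorem SatFrom.exists_val_ge (hβ : ∀ v, β v = 1 ∨ β v = 2) (hemb : IsIntPathEmbedding E val)
    {a v : Fin m} {L : List (Fin m)} (hw : LoopingAbove G ((v : ℕ) + 1) a v L) {i : ℕ}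
    {f : Fin m → B} (hs : SatFrom β G E i f) (ha : (a : ℕ) < i) (hv : i ≤ v) :
    ∃ f', AgreeBelow i f' f ∧ SatFrom β G E ((v : ℕ) + 1) f' ∧
      val (f a) - lamInterior β L + 2 * ((β v : ℤ) - 1) ≤ val (f' v) := by
  obtain ⟨f₁, f₂, hag₁, hag₂, hs₁, hs₂, hspread⟩ :=
    hs.exists_spread hβ hemb hv (show a < v by omega) hw.reachable
  have := hs₁.sub_le_lamInterior hβ hemb hw (by omega) (by omega)
  rw [hag₁ a ha] at this
  exact ⟨f₂, hag₂, hs₂, by linarith⟩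

theorem SatFrom.exists_val_le (hβ : ∀ v, β v = 1 ∨ β v = 2) (hemb : IsIntPathEmbedding E val)
    {a v : Fin m} {L : List (Fin m)} (hw : LoopingAbove G ((v : ℕ) + 1) a v L) {i : ℕ}
    {f : Fin m → B} (hs : SatFrom β G E i f) (ha : (a : ℕ) < i) (hv : i ≤ v) :
    ∃ f', AgreeBelow i f' f ∧ SatFrom β G E ((v : ℕ) + 1) f' ∧
      val (f' v) ≤ val (f a) + lamInterior β L - 2 * ((β v : ℤ) - 1) := by
  obtain ⟨f₁, f₂, hag₁, hag₂, hs₁, hs₂, hspread⟩ :=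
    hs.exists_spread hβ hemb hv (show a < v by omega) hw.reachable
  have := hs₂.sub_le_lamInterior hβ hemb hw.reverse (by omega) (by omega)
  rw [hag₂ a ha, lamInterior_reverse] at this
  exact ⟨f₁, hag₁, hs₁, by linarith⟩

end Game

section Gamma

variable {β : Fin m → ℕ} {G : SimpleGraph (Fin m)} {g : Fin m → ℤ} {n : ℕ}

theorem lamInterior_nonneg (hβ : ∀ v, β v = 1 ∨ β v = 2) (hinf : Sat β G intPathAdj) {i : ℕ}
    {x : Fin m} {L : List (Fin m)} (hw : LoopingAbove G i x x L) (hx : (x : ℕ) < i) :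
    0 ≤ lamInterior β L := by
  obtain ⟨f, hf⟩ := hinf.exists_satFrom (pos_of_eq_one_or_eq_two hβ) i
  simpa using hf.sub_le_lamInterior hβ isIntPathEmbedding_intPathAdj hw hx hx

theorem exists_isDelta_le (hβ : ∀ v, β v = 1 ∨ β v = 2) (hinf : Sat β G intPathAdj)
    {u v : Fin m} (huv : u < v) {L₀ : List (Fin m)} (hw : LoopingAbove G ((v : ℕ) + 1) u v L₀) :
    ∃ d, IsDelta G β u v d ∧ d ≤ lamInterior β L₀ := by
  obtain ⟨f, hf⟩ := hinf.exists_satFrom (pos_of_eq_one_or_eq_two hβ) (v + 1)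
  have hQ₀ := hw.loopingWalkBetween (by omega) (by omega) huv.ne
  have hbdd : ∀ Q, LoopingWalkBetween G u v Q → f u - f v ≤ lamWalk β Q := by
    intro Q hQ
    obtain ⟨L, hL, hlam⟩ := hQ.exists_loopingAbove huv
    rw [← hlam]
    exact hf.sub_le_lamInterior hβ isIntPathEmbedding_intPathAdj hL (by omega) (by omega)
  obtain ⟨d, ⟨Q, hQ, rfl⟩, hmin⟩ :=
    Int.exists_least_of_bdd (P := fun r => ∃ Q, LoopingWalkBetween G u v Q ∧ lamWalk β Q = r)
      ⟨f u - f v, by rintro _ ⟨Q, hQ, rfl⟩; exact hbdd Q hQ⟩ ⟨_, _, hQ₀, rfl⟩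
  refine ⟨_, ⟨⟨Q, hQ, rfl⟩, fun Q' hQ' => hmin _ ⟨Q', hQ', rfl⟩⟩, ?_⟩
  simpa [lamWalk_cons_append] using hmin _ ⟨_, hQ₀, rfl⟩

theorem IsGamma.eq_zero (hg : IsGamma G β g) {v : Fin m} (hv : (v : ℕ) = 0) : g v = 0 := by
  simpa [hv] using hg v

theorem IsGamma.exists_of_ne_zero (hg : IsGamma G β g) {v : Fin m} (hv : (v : ℕ) ≠ 0) :
    ∃ t, IsGammaVal G β g v t ∧ g v = (β v : ℤ) - 1 + t := by
  simpa [hv] using hg v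

theorem IsGamma.sub_one_le (hg : IsGamma G β g) {v : Fin m} (hv : (v : ℕ) ≠ 0) :
    (β v : ℤ) - 1 ≤ g v := by
  obtain ⟨t, ⟨ht, -⟩, hgv⟩ := hg.exists_of_ne_zero hv
  omega

theorem IsGamma.nonneg (hβ : ∀ v, β v = 1 ∨ β v = 2) (hg : IsGamma G β g) (v : Fin m) :
    0 ≤ g v := by
  by_cases hv : (v : ℕ) = 0
  · exact (hg.eq_zero hv).ge
  · have := hg.sub_one_le hv
    rcases hβ v with h | h <;> rw [h] at this <;> omega

theorem IsGamma.add_le (hβ : ∀ v, β v = 1 ∨ β v = 2) (hinf : Sat β G intPathAdj)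
    (hg : IsGamma G β g) {u v : Fin m} (huv : u < v) {L : List (Fin m)}
    (hw : LoopingAbove G ((v : ℕ) + 1) u v L) :
    g u + 2 * ((β v : ℤ) - 1) - lamInterior β L ≤ g v := by
  obtain ⟨d, hd, hdL⟩ := exists_isDelta_le hβ hinf huv hw
  obtain ⟨t, ⟨-, hmax, -⟩, hgv⟩ := hg.exists_of_ne_zero (show (v : ℕ) ≠ 0 by omega)
  have := hmax u huv d hd
  omega

/-- `Demand G β i u D`: along a chain `u = v₀ < v₁ < ⋯` of looping walks, starting at index
`≥ i`, the adversary can move the last value by `D` away from that of `u`, in either direction;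
so on `P_n` the value of `u` must keep distance `D` from both ends. -/
inductive Demand (G : SimpleGraph (Fin m)) (β : Fin m → ℕ) : ℕ → Fin m → ℤ → Prop
  | nil {i : ℕ} {u : Fin m} : Demand G β i u 0
  | cons {i : ℕ} {u v : Fin m} {L : List (Fin m)} {D : ℤ} : i ≤ (v : ℕ) → u < v →
      LoopingAbove G ((v : ℕ) + 1) u v L → Demand G β ((v : ℕ) + 1) v D →
      Demand G β i u (D + 2 * ((β v : ℤ) - 1) - lamInterior β L)

theorem Demand.mono {i j : ℕ} {u : Fin m} {D : ℤ} (h : Demand G β j u D) (hij : i ≤ j) :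
    Demand G β i u D := by
  cases h with
  | nil => exact .nil
  | cons hv huv hw hD => exact .cons (hij.trans hv) huv hw hD

theorem Demand.exists_le_sub (hβ : ∀ v, β v = 1 ∨ β v = 2) (hinf : Sat β G intPathAdj)
    (hg : IsGamma G β g) {i : ℕ} {u : Fin m} {D : ℤ} (h : Demand G β i u D) :
    ∃ w, D ≤ g w - g u := by
  induction h with
  | @nil _ u => exact ⟨u, by simp⟩
  | cons _ huv hw _ ih =>
    obtain ⟨w, hw'⟩ := ih
    exact ⟨w, by linarith [hg.add_le hβ hinf huv hw]⟩

theorem Demand.add_add_two_mul_le (hβ : ∀ v, β v = 1 ∨ β v = 2) (hinf : Sat β G intPathAdj)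
    (hg : IsGamma G β g) (hA : ∀ w, 2 * g w ≤ (n : ℤ) - 2) {i : ℕ} {u : Fin m} {D D' : ℤ}
    (hD : Demand G β i u D) (hD' : Demand G β i u D') : D + D' + 2 * g u ≤ (n : ℤ) - 2 := by
  obtain ⟨w, hw⟩ := hD.exists_le_sub hβ hinf hg
  obtain ⟨w', hw'⟩ := hD'.exists_le_sub hβ hinf hg
  linarith [hA w, hA w']

end Gamma

section Necessity

variable {B : Type*} {β : Fin m → ℕ} {G : SimpleGraph (Fin m)} {E : B → B → Prop}
  {val : B → ℤ} {g : Fin m → ℤ}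

theorem SatFrom.exists_two_mul_gamma_le_sub (hβ : ∀ v, β v = 1 ∨ β v = 2)
    (hemb : IsIntPathEmbedding E val) (hconn : G.Connected) (hg : IsGamma G β g)
    {f₀ : Fin m → B} (hs : SatFrom β G E 0 f₀) (v : Fin m) :
    ∃ f₁ f₂, SatFrom β G E ((v : ℕ) + 1) f₁ ∧ SatFrom β G E ((v : ℕ) + 1) f₂ ∧
      2 * g v ≤ val (f₁ v) - val (f₂ v) := by
  by_cases hv : (v : ℕ) = 0
  · obtain ⟨f, -, hf⟩ :=
      hs.advance (pos_of_eq_one_or_eq_two hβ) ((v : ℕ) + 1).zero_le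
    exact ⟨f, f, hf, hf, by simp [hg.eq_zero hv]⟩
  obtain ⟨t, ⟨-, -, ht⟩, hgv⟩ := hg.exists_of_ne_zero hv
  rcases ht with rfl | ⟨u, huv, d, hd, rfl⟩
  · obtain ⟨f₁, f₂, -, -, hs₁, hs₂, h⟩ := hs.exists_spread hβ hemb (v : ℕ).zero_le
      (show (⟨0, by omega⟩ : Fin m) < v by simp [Fin.lt_def]; omega) (hconn.preconnected _ _)
    exact ⟨f₂, f₁, hs₂, hs₁, by linarith⟩
  · obtain ⟨Q, hQ, rfl⟩ := hd.1
    obtain ⟨L, hL, hlam⟩ := hQ.exists_loopingAbove huv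
    obtain ⟨f₁, f₂, hs₁, hs₂, hu⟩ := hs.exists_two_mul_gamma_le_sub hβ hemb hconn hg u
    obtain ⟨f₁', -, hs₁', h₁⟩ := hs₁.exists_val_ge hβ hemb hL (by omega) (by omega)
    obtain ⟨f₂', -, hs₂', h₂⟩ := hs₂.exists_val_le hβ hemb hL (by omega) (by omega)
    exact ⟨f₁', f₂', hs₁', hs₂', by rw [hlam] at h₁ h₂; linarith⟩
termination_by (v : ℕ)
decreasing_by omega

theorem two_mul_gamma_lt_of_sat {n : ℕ} (hn : 0 < n) (hβ : ∀ v, β v = 1 ∨ β v = 2)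
    (hconn : G.Connected) (hg : IsGamma G β g) (hsat : Sat β G (pathAdj n)) (v : Fin m) :
    2 * g v < n := by
  obtain ⟨f₁, f₂, -, -, h⟩ := (hsat fun _ => ⟨0, hn⟩).exists_two_mul_gamma_le_sub hβ
    (isIntPathEmbedding_pathAdj n) hconn hg v
  have := (f₁ v).isLt
  omega

end Necessity

theorem exists_aligned_window (A : ℤ → Prop) (hA : ∀ l, A l ∨ A (l + 1)) (k : ℤ)
    {Lo Hi : ℤ → Prop} (hLo : ∃ l, Lo l) (hHi : ∃ h, Hi h)
    (hLoHi : ∀ l h, Lo l → Hi h → l + k ≤ h ∧ (¬ A l → l + k + 1 ≤ h)) :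
    ∃ c, A c ∧ (∀ l, Lo l → l ≤ c) ∧ ∀ h, Hi h → c + k ≤ h := by
  obtain ⟨h₀, hh₀⟩ := hHi
  obtain ⟨c₀, hc₀, hmax⟩ := Int.exists_greatest_of_bdd
    ⟨h₀ - k, fun l hl => by linarith [(hLoHi l h₀ hl hh₀).1]⟩ hLo
  by_cases hA₀ : A c₀
  · exact ⟨c₀, hA₀, hmax, fun h hh => (hLoHi c₀ h hc₀ hh).1⟩
  · exact ⟨c₀ + 1, (hA c₀).resolve_left hA₀, fun l hl => (hmax l hl).trans (by omega),
      fun h hh => by linarith [(hLoHi c₀ h hc₀ hh).2 hA₀]⟩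

section Strategy

variable {n : ℕ} {β : Fin m → ℕ} {G : SimpleGraph (Fin m)} {g : Fin m → ℤ}

structure SafePosition (n : ℕ) (G : SimpleGraph (Fin m)) (β : Fin m → ℕ) (i : ℕ)
    (f : Fin m → Fin n) : Prop where
  sub_le : ∀ ⦃x z : Fin m⦄ ⦃L : List (Fin m)⦄, (x : ℕ) < i → (z : ℕ) < i →
    LoopingAbove G i x z L → (f x : ℤ) - f z ≤ lamInterior β L
  sub_emod_two : ∀ ⦃x z : Fin m⦄ ⦃L : List (Fin m)⦄, (x : ℕ) < i → (z : ℕ) < i →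
    LoopingAbove G i x z L → ((f x : ℤ) - f z) % 2 = ((L.length : ℤ) + 1) % 2
  demand : ∀ ⦃u : Fin m⦄ ⦃D : ℤ⦄, (u : ℕ) < i → Demand G β i u D →
    D ≤ f u ∧ (f u : ℤ) ≤ n - 1 - D

def MoveLower (G : SimpleGraph (Fin m)) (β : Fin m → ℕ) (f : Fin m → Fin n) (v : Fin m)
    (r : ℤ) : Prop :=
  (∃ D, Demand G β ((v : ℕ) + 1) v D ∧ r = D) ∨
    ∃ u L, u < v ∧ LoopingAbove G ((v : ℕ) + 1) u v L ∧ r = f u - lamInterior β L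

def MoveUpper (n : ℕ) (G : SimpleGraph (Fin m)) (β : Fin m → ℕ) (f : Fin m → Fin n)
    (v : Fin m) (r : ℤ) : Prop :=
  (∃ D, Demand G β ((v : ℕ) + 1) v D ∧ r = n - 1 - D) ∨
    ∃ u L, u < v ∧ LoopingAbove G ((v : ℕ) + 1) u v L ∧ r = f u + lamInterior β L

def SafeMove (n : ℕ) (G : SimpleGraph (Fin m)) (β : Fin m → ℕ) (f : Fin m → Fin n)
    (v : Fin m) (b : ℤ) : Prop :=
  (∀ r, MoveLower G β f v r → r ≤ b) ∧ (∀ r, MoveUpper n G β f v r → b ≤ r) ∧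
    ∀ u L, u < v → LoopingAbove G ((v : ℕ) + 1) u v L →
      (b - f u) % 2 = ((L.length : ℤ) + 1) % 2

theorem SafeMove.exists_fin {f : Fin m → Fin n} {v : Fin m} {b : ℤ}
    (hb : SafeMove n G β f v b) : ∃ c : Fin n, (c : ℤ) = b := by
  have h₀ := hb.1 0 (.inl ⟨0, .nil, rfl⟩)
  have h₁ := hb.2.1 (n - 1) (.inl ⟨0, .nil, by ring⟩)
  exact ⟨⟨b.toNat, by omega⟩, by simp [h₀]⟩

namespace SafePosition

theorem zero (f : Fin m → Fin n) : SafePosition n G β 0 f :=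
  ⟨fun _ _ _ h => absurd h (Nat.not_lt_zero _), fun _ _ _ h => absurd h (Nat.not_lt_zero _),
    fun _ _ h => absurd h (Nat.not_lt_zero _)⟩

theorem pathAdj_of_le {i : ℕ} {f : Fin m → Fin n} (hsafe : SafePosition n G β i f) (hi : m ≤ i)
    {u v : Fin m} (huv : G.Adj u v) : pathAdj n (f u) (f v) := by
  have h₁ := hsafe.sub_le (by omega) (by omega) (.adj huv : LoopingAbove G i u v [])
  have h₂ := hsafe.sub_le (by omega) (by omega) (.adj huv.symm : LoopingAbove G i v u [])
  have h₃ := hsafe.sub_emod_two (by omega) (by omega) (.adj huv : LoopingAbove G i u v [])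
  simp only [lamInterior, List.length_nil, List.map_nil, List.sum_nil] at h₁ h₂ h₃
  unfold pathAdj
  omega

theorem update (hβ : ∀ v, β v = 1 ∨ β v = 2) (hinf : Sat β G intPathAdj) (hbip : Bipartite G)
    {v : Fin m} {f : Fin m → Fin n} (hsafe : SafePosition n G β v f) {b : Fin n}
    (hb : SafeMove n G β f v b) : SafePosition n G β ((v : ℕ) + 1) (Function.update f v b) := by
  have hold : ∀ x : Fin m, (x : ℕ) < v → Function.update f v b x = f x :=
    fun x hx => Function.update_of_ne (Fin.ne_of_lt hx) b f
  have hnew : ∀ x : Fin m, (x : ℕ) < v + 1 → ¬ (x : ℕ) < v → x = v := fun x h h' => by omega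
  refine ⟨fun x z L hx hz hw => ?_, fun x z L hx hz hw => ?_, fun u D hu hD => ?_⟩
  · by_cases hx' : (x : ℕ) < v <;> by_cases hz' : (z : ℕ) < v
    · rw [hold x hx', hold z hz']
      exact hsafe.sub_le hx' hz' (hw.mono (v : ℕ).le_succ)
    · obtain rfl := hnew z hz hz'
      rw [hold x hx', update_self]
      linarith [hb.1 _ (.inr ⟨x, L, hx', hw, rfl⟩)]
    · obtain rfl := hnew x hx hx'
      rw [update_self, hold z hz']
      have := hb.2.1 _ (.inr ⟨z, L.reverse, hz', hw.reverse, rfl⟩)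
      rw [lamInterior_reverse] at this
      linarith
    · obtain rfl := hnew x hx hx'
      obtain rfl := hnew z hz hz'
      simpa using lamInterior_nonneg hβ hinf hw hx
  · by_cases hx' : (x : ℕ) < v <;> by_cases hz' : (z : ℕ) < v
    · rw [hold x hx', hold z hz']
      exact hsafe.sub_emod_two hx' hz' (hw.mono (v : ℕ).le_succ)
    · obtain rfl := hnew z hz hz'
      rw [hold x hx', update_self]
      have := hb.2.2 x L hx' hw
      omega
    · obtain rfl := hnew x hx hx'
      rw [update_self, hold z hz']
      simpa using hb.2.2 z L.reverse hz' hw.reverse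
    · obtain rfl := hnew x hx hx'
      obtain rfl := hnew z hz hz'
      obtain ⟨p, hp⟩ := hw.exists_walk
      have := hbip.length_emod_two p
      rw [hp] at this
      push_cast at this
      omega
  · by_cases hu' : (u : ℕ) < v
    · rw [hold u hu']
      exact hsafe.demand hu' (hD.mono (v : ℕ).le_succ)
    · obtain rfl := hnew u hu hu'
      rw [update_self]
      exact ⟨hb.1 _ (.inl ⟨D, hD, rfl⟩), hb.2.1 _ (.inl ⟨D, hD, rfl⟩)⟩

variable {v : Fin m} {f : Fin m → Fin n} {u u' : Fin m} {L L' : List (Fin m)}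

theorem anchor_sub_le (hsafe : SafePosition n G β v f) (hu : u < v) (hu' : u' < v)
    (hw : LoopingAbove G ((v : ℕ) + 1) u v L) (hw' : LoopingAbove G ((v : ℕ) + 1) u' v L') :
    (f u : ℤ) - f u' ≤ lamInterior β L + lamInterior β L' - 2 * ((β v : ℤ) - 1) := by
  have := hsafe.sub_le hu hu' (.split le_rfl hw hw'.reverse)
  rwa [lamInterior_append, lamInterior_reverse] at this

theorem anchor_emod_two (hsafe : SafePosition n G β v f) (hu : u < v) (hu' : u' < v)
    (hw : LoopingAbove G ((v : ℕ) + 1) u v L) (hw' : LoopingAbove G ((v : ℕ) + 1) u' v L') :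
    ((f u : ℤ) + L.length - (f u' + L'.length)) % 2 = 0 := by
  have := hsafe.sub_emod_two hu hu' (.split le_rfl hw hw'.reverse)
  simp only [List.length_append, List.length_cons, List.length_reverse] at this
  push_cast at this
  omega

theorem anchor_demand (hsafe : SafePosition n G β v f) (hu : u < v)
    (hw : LoopingAbove G ((v : ℕ) + 1) u v L) {D : ℤ} (hD : Demand G β ((v : ℕ) + 1) v D) :
    D + 2 * ((β v : ℤ) - 1) - lamInterior β L ≤ f u ∧
      (f u : ℤ) ≤ n - 1 - (D + 2 * ((β v : ℤ) - 1) - lamInterior β L) :=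
  hsafe.demand hu (.cons le_rfl hu hw hD)

/-- If an earlier variable is joined to `v` by a looping walk, both values must have the parity
it dictates, hence differ by `2`; otherwise adjacent values suffice. -/
theorem exists_safeMove_pair (hβ : ∀ v, β v = 1 ∨ β v = 2) (hinf : Sat β G intPathAdj)
    (hg : IsGamma G β g) (hA : ∀ w, 2 * g w ≤ (n : ℤ) - 2) (hsafe : SafePosition n G β v f) :
    ∃ x y : ℤ, SafeMove n G β f v x ∧ SafeMove n G β f v y ∧ (β v = 1 → x = y) ∧
      (β v = 2 → x < y) := by
  have hdem := fun {D D' : ℤ} (hD : Demand G β ((v : ℕ) + 1) v D)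
    (hD' : Demand G β ((v : ℕ) + 1) v D') => hD.add_add_two_mul_le hβ hinf hg hA hD'
  have hLo : ∃ l, MoveLower G β f v l := ⟨0, .inl ⟨0, .nil, rfl⟩⟩
  have hHi : ∃ h, MoveUpper n G β f v h := ⟨n - 1, .inl ⟨0, .nil, by ring⟩⟩
  have hg₀ := hg.nonneg hβ v
  have hβv := hβ v
  by_cases hanchor : ∃ u₀ L₀, u₀ < v ∧ LoopingAbove G ((v : ℕ) + 1) u₀ v L₀
  · obtain ⟨u₀, L₀, hu₀, hw₀⟩ := hanchor
    have hgβ := hg.sub_one_le (show (v : ℕ) ≠ 0 by omega)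
    have hpar : ∀ u L, u < v → LoopingAbove G ((v : ℕ) + 1) u v L →
        ((f u : ℤ) + L.length - (f u₀ + L₀.length)) % 2 = 0 ∧
          lamInterior β L % 2 = ((L.length : ℤ) + 1) % 2 :=
      fun u L hu hw => ⟨hsafe.anchor_emod_two hu hu₀ hw hw₀, lamInterior_emod_two β L⟩
    obtain ⟨c, hc, hlo, hhi⟩ := exists_aligned_window
      (fun r => (r - (f u₀ + L₀.length + 1)) % 2 = 0) (fun l => by omega)
      (2 * ((β v : ℤ) - 1)) hLo hHi (by
        rintro l h (⟨D₀, hD₀, rfl⟩ | ⟨u, L, hu, hw, rfl⟩) (⟨D, hD, rfl⟩ | ⟨u', L', hu', hw', rfl⟩)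
        · have := hdem hD₀ hD
          omega
        · have := (hsafe.anchor_demand hu' hw' hD₀).1
          have := hpar u' L' hu' hw'
          omega
        · have := (hsafe.anchor_demand hu hw hD).2
          have := hpar u L hu hw
          omega
        · have := hsafe.anchor_sub_le hu hu' hw hw'
          have := hpar u L hu hw
          omega)
    have hmove : ∀ b, c ≤ b → b ≤ c + 2 * ((β v : ℤ) - 1) → (b - c) % 2 = 0 →
        SafeMove n G β f v b := fun b h₁ h₂ h₃ =>
      ⟨fun r hr => (hlo r hr).trans h₁, fun r hr => h₂.trans (hhi r hr), fun u L hu hw => by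
        have := hpar u L hu hw
        omega⟩
    exact ⟨c, c + 2 * ((β v : ℤ) - 1), hmove c le_rfl (by omega) (by simp),
      hmove _ (by omega) le_rfl (by omega), by omega, by omega⟩
  · push Not at hanchor
    obtain ⟨c, -, hlo, hhi⟩ := exists_aligned_window (fun _ => True) (fun _ => .inl trivial)
      ((β v : ℤ) - 1) hLo hHi (by
        rintro l h (⟨D₀, hD₀, rfl⟩ | ⟨u, L, hu, hw, -⟩) (⟨D, hD, rfl⟩ | ⟨u, L, hu, hw, -⟩)
        · have := hdem hD₀ hD
          exact ⟨by omega, absurd trivial⟩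
        all_goals exact absurd hw (hanchor u L hu))
    have hmove : ∀ b, c ≤ b → b ≤ c + ((β v : ℤ) - 1) → SafeMove n G β f v b :=
      fun b h₁ h₂ => ⟨fun r hr => (hlo r hr).trans h₁, fun r hr => h₂.trans (hhi r hr),
        fun u L hu hw => absurd hw (hanchor u L hu)⟩
    exact ⟨c, c + ((β v : ℤ) - 1), hmove c le_rfl (by omega), hmove _ (by omega) le_rfl,
      by omega, by omega⟩

theorem exists_finset_safeMove (hβ : ∀ v, β v = 1 ∨ β v = 2) (hinf : Sat β G intPathAdj)
    (hg : IsGamma G β g) (hA : ∀ w, 2 * g w ≤ (n : ℤ) - 2) (hsafe : SafePosition n G β v f) :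
    ∃ S : Finset (Fin n), S.card = β v ∧ ∀ b ∈ S, SafeMove n G β f v b := by
  obtain ⟨x, y, hx, hy, h₁, h₂⟩ := hsafe.exists_safeMove_pair hβ hinf hg hA
  obtain ⟨b, rfl⟩ := hx.exists_fin
  obtain ⟨b', rfl⟩ := hy.exists_fin
  rcases hβ v with hβv | hβv
  · exact ⟨{b}, by simp [hβv], by simpa using hx⟩
  · have hne : b ≠ b' := by
      rintro rfl
      exact lt_irrefl _ (h₂ hβv)
    exact ⟨{b, b'}, by rw [Finset.card_pair hne, hβv], by simp [hx, hy]⟩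

theorem satFrom (hβ : ∀ v, β v = 1 ∨ β v = 2) (hinf : Sat β G intPathAdj)
    (hbip : Bipartite G) (hg : IsGamma G β g) (hA : ∀ w, 2 * g w ≤ (n : ℤ) - 2) {i : ℕ}
    {f : Fin m → Fin n} (hsafe : SafePosition n G β i f) : SatFrom β G (pathAdj n) i f := by
  by_cases hi : i < m
  · obtain ⟨S, hcard, hS⟩ := hsafe.exists_finset_safeMove (v := ⟨i, hi⟩) hβ hinf hg hA
    exact (satFrom_iff_of_lt hi).2 ⟨S, hcard, fun b hb =>
      (hsafe.update (v := ⟨i, hi⟩) hβ hinf hbip (hS b hb)).satFrom hβ hinf hbip hg hA⟩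
  · exact (satFrom_iff_of_le (not_lt.1 hi)).2 fun u v huv =>
      hsafe.pathAdj_of_le (not_lt.1 hi) huv
termination_by m - i

end SafePosition

theorem sat_of_two_mul_gamma_le (hβ : ∀ v, β v = 1 ∨ β v = 2) (hinf : Sat β G intPathAdj)
    (hbip : Bipartite G) (hg : IsGamma G β g) (hA : ∀ w, 2 * g w ≤ (n : ℤ) - 2) :
    Sat β G (pathAdj n) :=
  fun f => (SafePosition.zero f).satFrom hβ hinf hbip hg hA

end Strategy

/-- Let `n ≥ 4` be even, `Ψ` an instance whose constraint graph `G` is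
connected and bipartite, with `P_∞ ⊨ Ψ`.  Then `P_n ⊨ Ψ` iff no vertex `v` has
`γ(v) ≥ n/2` (equivalently `2γ(v) ≥ n`, as `n` is even). -/
theorem evenPath_sat_iff {m n : ℕ} (hn : 4 ≤ n) (hev : Even n)
    (β : Fin m → ℕ) (hβ : ∀ v, β v = 1 ∨ β v = 2) (G : SimpleGraph (Fin m))
    (hconn : G.Connected) (hbip : Bipartite G)
    (hinf : Sat β G intPathAdj)
    (g : Fin m → ℤ) (hg : IsGamma G β g) :
    Sat β G (pathAdj n) ↔ ¬ ∃ v : Fin m, (n : ℤ) ≤ 2 * g v := by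
  refine ⟨fun hsat ⟨v, hv⟩ => ?_, fun h => sat_of_two_mul_gamma_le hβ hinf hbip hg fun w => ?_⟩
  · have := two_mul_gamma_lt_of_sat (by omega) hβ hconn hg hsat v
    omega
  · obtain ⟨k, rfl⟩ := hev
    have : ¬ ((k + k : ℕ) : ℤ) ≤ 2 * g w := fun h' => h ⟨w, h'⟩
    push_cast at this ⊢
    omega

end CountingCSP
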